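/- arXiv:1509.06573 — 4 statements merged into one kernel-verified Lean document; each statement's English description precedes it below -/
import Mathlib

section
/- Let R(t) = 256(t^2-t+1)^3/(t^2(1-t)^2). For all real t with 1/2 < t < 1 and R(t) ≥ 1000000, we have R(t) ≤ 265(t-1)^{-2} and 0 < R(-t) - 1728 ≤ 1363(t-1)^2. -/
noncomputable def R (t : ℝ) : ℝ := 256 * (t ^ 2 - t + 1) ^ 3 / (t ^ 2 * (1 - t) ^ 2)

/-!
Since `t ^ 2 - t + 1 = 1 - t (1 - t) ≤ 1`, on `[1/2, 1)` we have `R t ≤ 1024 / (1 - t) ^ 2`, so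
`R t ≥ 10⁶` forces `1 - t ≤ 4/125`. Near `t = 1` both bounds are polynomial inequalities: the first
directly, the second after the factorization
`R t - 1728 = 64 (t + 1)² (t - 2)² (2t - 1)² / (t² (1 - t)²)`.
-/

theorem R_sub_1728 {t : ℝ} (h0 : t ≠ 0) (h1 : t ≠ 1) :
    R t - 1728 = 64 * (t + 1) ^ 2 * (t - 2) ^ 2 * (2 * t - 1) ^ 2 / (t ^ 2 * (1 - t) ^ 2) := by
  have : 1 - t ≠ 0 := sub_ne_zero.2 h1.symm
  rw [R]
  field_simp
  ring

theorem R_le_div_one_sub_sq {t : ℝ} (ht : 1 / 2 ≤ t) (ht1 : t < 1) : R t ≤ 1024 / (1 - t) ^ 2 := by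
  have hs : 0 < 1 - t := by linarith
  rw [R, div_le_div_iff₀ (by positivity) (by positivity)]
  have hcube : (t ^ 2 - t + 1) ^ 3 ≤ 1 := pow_le_one₀ (by nlinarith) (by nlinarith)
  have ht2 : 1 / 4 ≤ t ^ 2 := by nlinarith
  nlinarith [mul_le_mul_of_nonneg_right hcube (sq_nonneg (1 - t)),
    mul_le_mul_of_nonneg_right ht2 (sq_nonneg (1 - t))]

theorem one_sub_le_of_le_R {t : ℝ} (ht : 1 / 2 ≤ t) (ht1 : t < 1) (hR : 1000000 ≤ R t) :
    1 - t ≤ 4 / 125 := by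
  have hs : 0 < 1 - t := by linarith
  have h := hR.trans (R_le_div_one_sub_sq ht ht1)
  rw [le_div_iff₀ (by positivity)] at h
  nlinarith

theorem R_le_of_near_one {t : ℝ} (ht : 1 - 4 / 125 ≤ t) (ht1 : t < 1) :
    R t ≤ 265 * (t - 1) ^ (-2 : ℤ) := by
  have hs : 0 < 1 - t := by linarith
  have key : 256 * (t ^ 2 - t + 1) ^ 3 ≤ 265 * t ^ 2 := by
    obtain ⟨s, rfl⟩ : ∃ s, t = 1 - s := ⟨1 - t, by ring⟩
    have hs0 : 0 < s := by linarith
    have hquad : 1 - s + s ^ 2 ≤ 1 - 121 / 125 * s := by nlinarith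
    have hcube := pow_le_pow_left₀ (by nlinarith) hquad 3
    nlinarith [mul_pos hs0 hs0, mul_pos (mul_pos hs0 hs0) hs0]
  rw [zpow_neg, zpow_two, ← sq, ← neg_sq, neg_sub, ← div_eq_mul_inv, R,
    div_le_div_iff₀ (by positivity) (by positivity)]
  nlinarith [mul_le_mul_of_nonneg_right key (sq_nonneg (1 - t))]

theorem R_neg_sub_1728 {t : ℝ} (h0 : t ≠ 0) (h1 : t ≠ -1) :
    R (-t) - 1728 = 64 * (t + 2) ^ 2 * (2 * t + 1) ^ 2 * (t - 1) ^ 2 / (t ^ 2 * (t + 1) ^ 2) := by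
  rw [R_sub_1728 (neg_ne_zero.2 h0) (by contrapose! h1; linarith)]
  ring

theorem R_neg_sub_1728_pos {t : ℝ} (h0 : 0 < t) (h1 : t ≠ 1) : 0 < R (-t) - 1728 := by
  have : t - 1 ≠ 0 := sub_ne_zero.2 h1
  rw [R_neg_sub_1728 h0.ne' (by linarith)]
  positivity

theorem R_neg_sub_1728_le {t : ℝ} (ht : 1 - 4 / 125 ≤ t) :
    R (-t) - 1728 ≤ 1363 * (t - 1) ^ 2 := by
  have h0 : 0 < t := by linarith
  -- `1363 > 36.9 ^ 2`, and `8 (t + 2) (2t + 1) ≤ 36.9 t (t + 1)` holds for `t ≥ 0.953`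
  have hroot : 8 * (t + 2) * (2 * t + 1) ≤ 369 / 10 * (t * (t + 1)) := by nlinarith
  have key : 64 * (t + 2) ^ 2 * (2 * t + 1) ^ 2 ≤ 1363 * (t ^ 2 * (t + 1) ^ 2) := by
    nlinarith [pow_le_pow_left₀ (by nlinarith) hroot 2, sq_nonneg (t * (t + 1))]
  rw [R_neg_sub_1728 h0.ne' (by linarith), div_le_iff₀ (by positivity)]
  nlinarith [mul_le_mul_of_nonneg_right key (sq_nonneg (t - 1))]

theorem stmt1 (t : ℝ) (h1 : 1 / 2 < t) (h2 : t < 1) (h3 : R t ≥ 1000000) :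
    R t ≤ 265 * (t - 1) ^ (-2 : ℤ) ∧ 0 < R (-t) - 1728 ∧ R (-t) - 1728 ≤ 1363 * (t - 1) ^ 2 := by
  have hnear : 1 - 4 / 125 ≤ t := by linarith [one_sub_le_of_le_R h1.le h2 h3]
  exact ⟨R_le_of_near_one hnear h2, R_neg_sub_1728_pos (by linarith) h2.ne,
    R_neg_sub_1728_le hnear⟩
end

section
/- Let R(t) = 256(t^2-t+1)^3/(t^2(1-t)^2). For all real t < -1 with R(t) ≥ 1000000, we have R(-t) ≥ R(t) - 32√(R(t)). -/
/-!
For `t ∉ {0, 1, -1}` one computes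
`R t - R (-t) = 512 (-t) (t² + 1) (t⁴ - 3t² + 1) / (t² (1 - t)² (1 + t)²)`.
For `t < 0` this is `≤ 0` unless `t⁴ - 3t² + 1 > 0`, and in that case
`1024 R t - (R t - R (-t))²` has numerator
`(-t)(t² + 1)(t² - 1)²(t⁴ - 3t² + 1) + 3t²(t² + 1)²(t⁴ - 3t² + 1) + 8t⁶ ≥ 0`,
so `R t - R (-t) ≤ √(1024 R t) = 32 √(R t)`.
-/

lemma le_mul_sqrt_of_sq_le_sq_mul {a b c : ℝ} (hc : 0 ≤ c) (h : a ^ 2 ≤ c ^ 2 * b) :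
    a ≤ c * √b :=
  calc a ≤ |a| := le_abs_self a
    _ = √(a ^ 2) := (Real.sqrt_sq_eq_abs a).symm
    _ ≤ √(c ^ 2 * b) := Real.sqrt_le_sqrt h
    _ = c * √b := by rw [Real.sqrt_mul (sq_nonneg c), Real.sqrt_sq hc]

section

variable {t : ℝ}

lemma R_sub_R_neg (ht0 : t ≠ 0) (ht1 : t ≠ 1) (htm1 : t ≠ -1) :
    R t - R (-t) =
      512 * (-t) * (t ^ 2 + 1) * (t ^ 4 - 3 * t ^ 2 + 1) / (t ^ 2 * (1 - t) ^ 2 * (1 + t) ^ 2) := by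
  have : (1 : ℝ) - t ≠ 0 := sub_ne_zero.mpr ht1.symm
  have : (1 : ℝ) + t ≠ 0 := fun h ↦ htm1 (by linarith)
  have : (1 : ℝ) - -t ≠ 0 := by rwa [sub_neg_eq_add]
  simp only [R]
  field_simp
  ring

lemma mul_R_sub_sq_R_sub_R_neg (ht0 : t ≠ 0) (ht1 : t ≠ 1) (htm1 : t ≠ -1) :
    1024 * R t - (R t - R (-t)) ^ 2 =
      262144 * ((t ^ 2 - t + 1) ^ 3 * (1 - t) ^ 2 * (1 + t) ^ 4
          - (t ^ 2 + 1) ^ 2 * (t ^ 4 - 3 * t ^ 2 + 1) ^ 2)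
        / (t ^ 2 * (1 - t) ^ 4 * (1 + t) ^ 4) := by
  have : (1 : ℝ) - t ≠ 0 := sub_ne_zero.mpr ht1.symm
  have : (1 : ℝ) + t ≠ 0 := fun h ↦ htm1 (by linarith)
  rw [R_sub_R_neg ht0 ht1 htm1]
  simp only [R]
  field_simp
  ring

lemma R_sub_R_neg_nonpos (ht : t < 0) (htm1 : t ≠ -1) (hq : t ^ 4 - 3 * t ^ 2 + 1 ≤ 0) :
    R t - R (-t) ≤ 0 := by
  rw [R_sub_R_neg ht.ne (ht.trans one_pos).ne htm1]
  refine div_nonpos_of_nonpos_of_nonneg ?_ (by positivity)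
  have : 0 ≤ -t * (t ^ 2 + 1) := mul_nonneg (by linarith) (by positivity)
  nlinarith

lemma sq_R_sub_R_neg_le (ht : t < 0) (htm1 : t ≠ -1) (hq : 0 ≤ t ^ 4 - 3 * t ^ 2 + 1) :
    (R t - R (-t)) ^ 2 ≤ 32 ^ 2 * R t := by
  have hnum : 0 ≤ (t ^ 2 - t + 1) ^ 3 * (1 - t) ^ 2 * (1 + t) ^ 4
      - (t ^ 2 + 1) ^ 2 * (t ^ 4 - 3 * t ^ 2 + 1) ^ 2 := by
    have e1 : 0 ≤ -t * (t ^ 2 + 1) * (t ^ 2 - 1) ^ 2 * (t ^ 4 - 3 * t ^ 2 + 1) :=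
      mul_nonneg (mul_nonneg (mul_nonneg (by linarith) (by positivity)) (by positivity)) hq
    have e2 : 0 ≤ 3 * t ^ 2 * (t ^ 2 + 1) ^ 2 * (t ^ 4 - 3 * t ^ 2 + 1) :=
      mul_nonneg (by positivity) hq
    have e3 : 0 ≤ 8 * t ^ 6 := by positivity
    linear_combination e1 + e2 + e3
  have : 0 ≤ 1024 * R t - (R t - R (-t)) ^ 2 := by
    rw [mul_R_sub_sq_R_sub_R_neg ht.ne (ht.trans one_pos).ne htm1]
    positivity
  linarith

lemma R_sub_R_neg_le (ht : t < 0) (htm1 : t ≠ -1) : R t - R (-t) ≤ 32 * √(R t) := by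
  rcases le_total (t ^ 4 - 3 * t ^ 2 + 1) 0 with hq | hq
  · exact (R_sub_R_neg_nonpos ht htm1 hq).trans (by positivity)
  · exact le_mul_sqrt_of_sq_le_sq_mul (by norm_num) (sq_R_sub_R_neg_le ht htm1 hq)

end

theorem stmt2_general (t : ℝ) (h1 : t < -1) :
    R (-t) ≥ R t - 32 * Real.sqrt (R t) := by
  have := R_sub_R_neg_le (h1.trans (by norm_num)) h1.ne
  linarith

theorem stmt2 (t : ℝ) (h1 : t < -1) (h3 : R t ≥ 1000000) :
    R (-t) ≥ R t - 32 * Real.sqrt (R t) :=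
  stmt2_general t h1
end

section
/- If n ≥ 2 is an integer such that φ(n)/2 < #{a ∈ (Z/nZ)^× : a^2 = 1}, then n divides 24. -/
theorem stmt8 (n : ℕ) (hn : 2 ≤ n)
    (h : (Nat.totient n : ℝ) / 2 < (Nat.card {a : (ZMod n)ˣ // a ^ 2 = 1} : ℝ)) :
    n ∣ 24 := by
  have hn0 : n ≠ 0 := by omega
  haveI : NeZero n := ⟨hn0⟩
  -- the subgroup of square roots of 1
  set H : Subgroup (ZMod n)ˣ := (powMonoidHom 2 : (ZMod n)ˣ →* (ZMod n)ˣ).ker with hH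
  have hcardH : Nat.card {a : (ZMod n)ˣ // a ^ 2 = 1} = Nat.card H := rfl
  have hdvd : Nat.card H ∣ Nat.card (ZMod n)ˣ := Subgroup.card_subgroup_dvd_card H
  have hcardG : Nat.card (ZMod n)ˣ = n.totient := by
    rw [Nat.card_eq_fintype_card, ZMod.card_units_eq_totient]
  have htpos : 0 < n.totient := Nat.totient_pos.mpr (by omega)
  -- from h : totient/2 < card H, get 2 * card H > totient
  have h2 : n.totient < 2 * Nat.card H := by
    rw [hcardH] at h
    have := (div_lt_iff₀ (by norm_num : (0:ℝ) < 2)).mp h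
    exact_mod_cast by
      have : (n.totient : ℝ) < 2 * Nat.card H := by linarith
      exact_mod_cast this
  have hEq : Nat.card H = n.totient := by
    rw [hcardG] at hdvd
    obtain ⟨c, hc⟩ := hdvd
    rcases Nat.lt_or_ge c 2 with hc2 | hc2
    · interval_cases c
      · omega
      · omega
    · nlinarith [Nat.card H, hc, h2]
  have hTop : H = ⊤ := by
    apply Subgroup.eq_top_of_card_eq
    rw [hEq, hcardG]
  have hall : ∀ a : (ZMod n)ˣ, a ^ 2 = 1 := fun a => by
    have : a ∈ H := hTop ▸ Subgroup.mem_top a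
    exact this
  -- property descends to divisors
  have hdesc : ∀ m : ℕ, m ∣ n → ∀ b : (ZMod m)ˣ, b ^ 2 = 1 := by
    intro m hm b
    obtain ⟨a, ha⟩ := ZMod.unitsMap_surjective hm b
    rw [← ha, ← map_pow, hall a, map_one]
  -- no prime ≥ 5 divides n
  have hp3 : ∀ p : ℕ, p.Prime → p ∣ n → p ≤ 3 := by
    intro p hp hpn
    by_contra hlt
    push_neg at hlt
    have hcop : Nat.Coprime 2 p := (Nat.coprime_primes Nat.prime_two hp).mpr (by omega)
    have := hdesc p hpn (ZMod.unitOfCoprime 2 hcop)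
    have h4 : ((2 : ZMod p)) ^ 2 = 1 := by
      have := congrArg (Units.val) this
      simpa [ZMod.unitOfCoprime] using this
    have h3 : ((3 : ZMod p)) = 0 := by
      have : ((4 : ZMod p)) = 1 := by push_cast at h4 ⊢; linear_combination h4
      linear_combination this
    have : (p : ℕ) ∣ 3 := by
      have := (ZMod.natCast_eq_zero_iff 3 p).mp (by exact_mod_cast h3)
      exact this
    have := Nat.le_of_dvd (by norm_num) this
    omega
  have h16 : ¬ (16 ∣ n) := by
    intro h16
    have := hdesc 16 h16 (ZMod.unitOfCoprime 3 (by decide))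
    have h9 : ((3 : ZMod 16)) ^ 2 = 1 := by
      have := congrArg (Units.val) this
      simpa [ZMod.unitOfCoprime] using this
    revert h9; decide
  have h9 : ¬ (9 ∣ n) := by
    intro h9
    have := hdesc 9 h9 (ZMod.unitOfCoprime 2 (by decide))
    have h4 : ((2 : ZMod 9)) ^ 2 = 1 := by
      have := congrArg (Units.val) this
      simpa [ZMod.unitOfCoprime] using this
    revert h4; decide
  -- conclude n ∣ 24
  rw [← Nat.factorization_le_iff_dvd hn0 (by norm_num)]
  rw [Finsupp.le_def]
  intro p
  rcases Nat.eq_zero_or_pos (n.factorization p) with h0 | hpos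
  · simp [h0]
  · have hp : p.Prime := Nat.prime_of_mem_primeFactors ((Nat.support_factorization n) ▸ Finsupp.mem_support_iff.mpr (by omega))
    have hpn : p ∣ n := Nat.dvd_of_mem_primeFactors ((Nat.support_factorization n) ▸ Finsupp.mem_support_iff.mpr (by omega))
    have hple := hp3 p hp hpn
    have h2p := hp.two_le
    interval_cases p
    · -- p = 2
      have : n.factorization 2 ≤ 3 := by
        by_contra hgt
        push_neg at hgt
        have : (16 : ℕ) ∣ n := by
          calc (16:ℕ) = 2 ^ 4 := by norm_num
          _ ∣ 2 ^ n.factorization 2 := pow_dvd_pow 2 hgt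
          _ ∣ n := Nat.ordProj_dvd n 2
        exact h16 this
      have : Nat.factorization 24 2 = 3 := by
        rw [show (24:ℕ) = 2^3 * 3 by norm_num, Nat.factorization_mul (by norm_num) (by norm_num),
          Nat.Prime.factorization_pow (by norm_num), Nat.Prime.factorization (by norm_num)]
        simp
      omega
    · -- p = 3
      have : n.factorization 3 ≤ 1 := by
        by_contra hgt
        push_neg at hgt
        have : (9 : ℕ) ∣ n := by
          calc (9:ℕ) = 3 ^ 2 := by norm_num
          _ ∣ 3 ^ n.factorization 3 := pow_dvd_pow 3 hgt
          _ ∣ n := Nat.ordProj_dvd n 3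
        exact h9 this
      have : Nat.factorization 24 3 = 1 := by
        rw [show (24:ℕ) = 2^3 * 3 by norm_num, Nat.factorization_mul (by norm_num) (by norm_num),
          Nat.Prime.factorization_pow (by norm_num), Nat.Prime.factorization (by norm_num)]
        simp
      omega
end

section
/- Let t be a root of t^2 - 16t + 16 = 0 and consider the Legendre elliptic curve E_t : y^2 = x(x-1)(x-t) over the algebraic numbers. Then any point on E_t with abscissa 2 has order exactly 6. -/
/-! Let `T = (t, 0)`, a point of order 2. For `P = (x, y)` with `y ≠ 0`, the doubling formula
`x(2P) = (x² - t)² / 4y²` and the translation formula `x(P + T) = t(x - 1) / (x - t)` agree exactly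
when `(x² - t)² = 4tx(x - 1)²`, which for `x = 2` reads `t² - 16t + 16 = 0`. Then `2P = ±(P + T)`;
the sign `+` would force `P = T`, so `2P = -(P + T)`, i.e. `3P = -T = T`. Hence `6P = 0` while
`2P ≠ 0` and `3P ≠ 0`. -/

/-- The Legendre curve `E_t : y² = x(x-1)(x-t) = x³ - (1+t)x² + tx`. -/
def Legendre (t : ℂ) : WeierstrassCurve ℂ := ⟨0, -(1 + t), 0, t, 0⟩

open WeierstrassCurve.Affine

lemma addOrderOf_eq_six {G : Type*} [AddMonoid G] {a : G} (h6 : 6 • a = 0) (h2 : 2 • a ≠ 0)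
    (h3 : 3 • a ≠ 0) : addOrderOf a = 6 := by
  refine addOrderOf_eq_of_nsmul_and_div_prime_nsmul (by norm_num) h6 fun p hp hp6 ↦ ?_
  rcases (Nat.Prime.dvd_mul hp).mp (show p ∣ 2 * 3 from hp6) with hp2 | hp3
  · rw [(Nat.prime_dvd_prime_iff_eq hp Nat.prime_two).mp hp2]
    exact h3
  · rw [(Nat.prime_dvd_prime_iff_eq hp Nat.prime_three).mp hp3]
    exact h2

namespace Legendre

variable {t : ℂ}

lemma equation_iff {x y : ℂ} :
    (Legendre t).toAffine.Equation x y ↔ y ^ 2 = x * (x - 1) * (x - t) := by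
  rw [WeierstrassCurve.Affine.equation_iff]
  simp only [Legendre]
  constructor <;> intro h <;> linear_combination h

lemma negY_eq (x y : ℂ) : (Legendre t).toAffine.negY x y = -y := by
  simp [negY, Legendre]

lemma nonsingular_t_zero (h0 : t ≠ 0) (h1 : t ≠ 1) : (Legendre t).toAffine.Nonsingular t 0 := by
  rw [nonsingular_iff, equation_iff]
  refine ⟨by ring, Or.inl ?_⟩
  simp only [Legendre]
  exact fun h ↦ mul_ne_zero h0 (sub_ne_zero.mpr h1) (by linear_combination -h)

lemma Y_ne_negY {x y : ℂ} (hy : y ≠ 0) : y ≠ (Legendre t).toAffine.negY x y := by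
  rw [negY_eq]
  exact fun h ↦ hy (by linear_combination h / 2)

lemma addX_slope_self {x y : ℂ} (h : (Legendre t).toAffine.Equation x y) (hy : y ≠ 0) :
    (Legendre t).toAffine.addX x x ((Legendre t).toAffine.slope x x y y) =
      (x ^ 2 - t) ^ 2 / (4 * y ^ 2) := by
  rw [equation_iff] at h
  rw [slope_of_Y_ne rfl (Y_ne_negY hy), addX, negY_eq]
  simp only [Legendre]
  field_simp
  linear_combination 16 * (1 + t - 2 * x) * h

lemma addX_slope_t_zero {x y : ℂ} (h : (Legendre t).toAffine.Equation x y) (hx : x ≠ t) :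
    (Legendre t).toAffine.addX x t ((Legendre t).toAffine.slope x t y 0) =
      t * (x - 1) / (x - t) := by
  rw [equation_iff] at h
  rw [slope_of_X_ne hx, addX]
  have : x - t ≠ 0 := sub_ne_zero.mpr hx
  simp only [Legendre]
  field_simp
  linear_combination h

lemma neg_some_t_zero (hT : (Legendre t).toAffine.Nonsingular t 0) :
    -Point.some _ _ hT = Point.some _ _ hT := by
  rw [Point.neg_some]
  congr 1
  rw [negY_eq, neg_zero]

lemma two_nsmul_some_eq_neg_add_some_t_zero {x y : ℂ} (h : (Legendre t).toAffine.Nonsingular x y)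
    (hT : (Legendre t).toAffine.Nonsingular t 0) (hy : y ≠ 0)
    (hx : (x ^ 2 - t) ^ 2 = 4 * t * x * (x - 1) ^ 2) :
    2 • Point.some _ _ h = -(Point.some _ _ h + Point.some _ _ hT) := by
  have hy2 := equation_iff.mp h.1
  have hxt : x ≠ t := by
    rintro rfl
    exact hy (by simpa using hy2)
  have hX : (Legendre t).toAffine.addX x x ((Legendre t).toAffine.slope x x y y) =
      (Legendre t).toAffine.addX x t ((Legendre t).toAffine.slope x t y 0) := by
    rw [addX_slope_self h.1 hy, addX_slope_t_zero h.1 hxt,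
      div_eq_div_iff (by simpa using hy) (sub_ne_zero.mpr hxt), hy2]
    linear_combination (x - t) * hx
  have h2P : 2 • Point.some _ _ h = Point.some _ _ h + Point.some _ _ hT ∨
      2 • Point.some _ _ h = -(Point.some _ _ h + Point.some _ _ hT) := by
    rw [two_nsmul, Point.add_self_of_Y_ne (Y_ne_negY hy), Point.add_of_X_ne hxt]
    exact Point.X_eq_iff.mp hX
  refine h2P.resolve_left fun h2P ↦ hy ?_
  rw [two_nsmul] at h2P
  exact ((Point.some.injEq ..).mp (add_left_cancel h2P)).2

theorem addOrderOf_some_eq_six (h0 : t ≠ 0) (h1 : t ≠ 1) {x y : ℂ}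
    (h : (Legendre t).toAffine.Nonsingular x y) (hy : y ≠ 0)
    (hx : (x ^ 2 - t) ^ 2 = 4 * t * x * (x - 1) ^ 2) :
    addOrderOf (Point.some _ _ h) = 6 := by
  have hT := nonsingular_t_zero h0 h1
  have h2P := two_nsmul_some_eq_neg_add_some_t_zero h hT hy hx
  have h3P : 3 • Point.some _ _ h = Point.some _ _ hT := by
    rw [succ_nsmul, h2P, neg_add_rev, neg_add_cancel_right, neg_some_t_zero]
  refine addOrderOf_eq_six ?_ ?_ ?_
  · rw [show 6 = 3 * 2 from rfl, mul_nsmul, h3P, two_nsmul]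
    nth_rw 1 [← neg_some_t_zero]
    exact neg_add_cancel _
  · rw [h2P, neg_ne_zero, Ne, add_eq_zero_iff_eq_neg, neg_some_t_zero]
    exact fun hPT ↦ hy ((Point.some.injEq ..).mp hPT).2
  · rw [h3P]
    exact Point.some_ne_zero _

end Legendre

theorem stmt12 (t : ℂ) (ht : t ^ 2 - 16 * t + 16 = 0) (η : ℂ)
    (h : (Legendre t).toAffine.Nonsingular 2 η) :
    addOrderOf (WeierstrassCurve.Affine.Point.some _ _ h) = 6 := by
  have hη2 : η ^ 2 = 2 * (2 - t) := by linear_combination Legendre.equation_iff.mp h.1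
  refine Legendre.addOrderOf_some_eq_six ?_ ?_ h ?_ (by linear_combination ht)
  · rintro rfl
    norm_num at ht
  · rintro rfl
    norm_num at ht
  · rintro rfl
    obtain rfl : t = 2 := by linear_combination hη2 / 2
    norm_num at ht
end
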